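/- Let G be a finite simple graph on n vertices and H(G) its hairing. Then for every nonzero real number λ, χ_{H(G)}(λ) = λ^{2n} · (−1)^n · χ_{H(G)}(−1/λ), where χ denotes the characteristic polynomial of the adjacency matrix. -/

import Mathlib

open Polynomial

/-- The characteristic polynomial (of the adjacency matrix) of a finite simple graph. -/
noncomputable def charPoly {V : Type*} [Finite V] (G : SimpleGraph V) : Polynomial ℤ :=
  letI := Fintype.ofFinite V
  letI := Classical.decEq V
  letI := Classical.decRel G.Adj
  (SimpleGraph.adjMatrix ℤ G).charpoly

/-- The hairing of `G`: attach a pendant vertex to every vertex of `G`.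
Vertices `(u, false)` form the original graph and `(u, true)` is the pendant at `u`. -/
def hairing {V : Type*} (G : SimpleGraph V) : SimpleGraph (V × Bool) where
  Adj a b := (a.2 = false ∧ b.2 = false ∧ G.Adj a.1 b.1) ∨ (a.1 = b.1 ∧ a.2 ≠ b.2)
  symm := by
    constructor
    rintro a b (⟨ha, hb, hadj⟩ | ⟨h1, h2⟩)
    · exact Or.inl ⟨hb, ha, hadj.symm⟩
    · exact Or.inr ⟨h1.symm, h2.symm⟩
  loopless := by
    constructor
    rintro a (⟨_, _, hadj⟩ | ⟨_, h⟩)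
    · exact G.loopless.irrefl _ hadj
    · exact h rfl

/-!
Listing the original vertices before the pendants, the adjacency matrix of `H(G)` is the block
matrix `[[A, 1], [1, 0]]` with `A` the adjacency matrix of `G`. For `λ ≠ 0`, taking the Schur
complement of the invertible block `λ • 1` gives `χ_{H(G)}(λ) = λⁿ χ_G(λ - λ⁻¹)`, and
`λ - λ⁻¹` is invariant under `λ ↦ -λ⁻¹`.
-/

namespace Matrix

variable {n K : Type*} [Fintype n] [DecidableEq n] [Field K]

theorem det_fromBlocks_neg_one_scalar (A : Matrix n n K) {r : K} (hr : r ≠ 0) :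
    (fromBlocks A (-1) (-1) (scalar n r)).det = r ^ Fintype.card n * (A - scalar n r⁻¹).det := by
  let _ : Invertible (scalar n r) :=
    ⟨scalar n r⁻¹, by rw [← map_mul, inv_mul_cancel₀ hr, map_one],
      by rw [← map_mul, mul_inv_cancel₀ hr, map_one]⟩
  have hinv : ⅟(scalar n r) = scalar n r⁻¹ := rfl
  rw [det_fromBlocks₂₂, hinv, neg_one_mul, neg_mul_neg, mul_one, scalar_apply, det_diagonal,
    Finset.prod_const, Finset.card_univ]

theorem eval_charpoly_fromBlocks_one_one_zero (M : Matrix n n K) {r : K} (hr : r ≠ 0) :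
    (fromBlocks M (1 : Matrix n n K) 1 0).charpoly.eval r =
      r ^ Fintype.card n * M.charpoly.eval (r - r⁻¹) := by
  have hblocks : scalar (n ⊕ n) r - fromBlocks M 1 1 0 =
      fromBlocks (scalar n r - M) (-1) (-1) (scalar n r) := by
    ext (i | i) (j | j) <;> simp [scalar_apply, diagonal_apply, one_apply]
  rw [eval_charpoly, eval_charpoly, hblocks, det_fromBlocks_neg_one_scalar _ hr, map_sub]
  congr 2
  abel

end Matrix

namespace SimpleGraph

variable {V : Type*}

theorem charPoly_eq_charpoly [Fintype V] [DecidableEq V] (G : SimpleGraph V) [DecidableRel G.Adj] :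
    charPoly G = (G.adjMatrix ℤ).charpoly := by
  unfold charPoly
  congr!

theorem map_adjMatrix {R S : Type*} [NonAssocSemiring R] [NonAssocSemiring S] (f : R →+* S)
    (G : SimpleGraph V) [DecidableRel G.Adj] : (G.adjMatrix R).map f = G.adjMatrix S := by
  ext i j
  simp [adjMatrix_apply, apply_ite f]

theorem aeval_charPoly {R : Type*} [CommRing R] [Fintype V] [DecidableEq V] (G : SimpleGraph V)
    [DecidableRel G.Adj] (r : R) : aeval r (charPoly G) = (G.adjMatrix R).charpoly.eval r := by
  rw [charPoly_eq_charpoly, aeval_def, eval₂_eq_eval_map, ← Matrix.charpoly_map, map_adjMatrix]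

@[simp]
theorem hairing_adj (G : SimpleGraph V) {a b : V × Bool} :
    (hairing G).Adj a b ↔ a.2 = false ∧ b.2 = false ∧ G.Adj a.1 b.1 ∨ a.1 = b.1 ∧ a.2 ≠ b.2 :=
  Iff.rfl

instance [DecidableEq V] (G : SimpleGraph V) [DecidableRel G.Adj] :
    DecidableRel (hairing G).Adj :=
  fun _ _ => inferInstanceAs (Decidable (_ ∨ _))

theorem reindex_adjMatrix_hairing {R : Type*} [Zero R] [One R] [DecidableEq V]
    (G : SimpleGraph V) [DecidableRel G.Adj] :
    Matrix.reindex ((Equiv.prodComm V Bool).trans (Equiv.boolProdEquivSum V))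
        ((Equiv.prodComm V Bool).trans (Equiv.boolProdEquivSum V)) ((hairing G).adjMatrix R) =
      Matrix.fromBlocks (G.adjMatrix R) 1 1 0 := by
  ext (u | u) (v | v) <;> by_cases h : u = v <;>
    simp [adjMatrix_apply, Equiv.boolProdEquivSum, h]

theorem eval_charpoly_adjMatrix_hairing {K : Type*} [Field K] [Fintype V] [DecidableEq V]
    (G : SimpleGraph V) [DecidableRel G.Adj] {r : K} (hr : r ≠ 0) :
    ((hairing G).adjMatrix K).charpoly.eval r =
      r ^ Fintype.card V * (G.adjMatrix K).charpoly.eval (r - r⁻¹) := by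
  rw [← Matrix.charpoly_reindex ((Equiv.prodComm V Bool).trans (Equiv.boolProdEquivSum V)),
    reindex_adjMatrix_hairing, Matrix.eval_charpoly_fromBlocks_one_one_zero _ hr]

end SimpleGraph

/-- For a finite simple graph `G` on `n` vertices and every nonzero real `λ`,
`χ_{H(G)}(λ) = λ^(2n) · (-1)^n · χ_{H(G)}(-1/λ)`. -/
theorem charPoly_hairing_functional_equation {V : Type*} [Finite V] (G : SimpleGraph V)
    (lam : ℝ) (hlam : lam ≠ 0) :
    Polynomial.aeval lam (charPoly (hairing G)) =
      lam ^ (2 * Nat.card V) * (-1) ^ (Nat.card V) *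
        Polynomial.aeval (-(1 / lam)) (charPoly (hairing G)) := by
  classical
  have : Fintype V := Fintype.ofFinite V
  have hchar (r : ℝ) (hr : r ≠ 0) : aeval r (charPoly (hairing G)) =
      r ^ Nat.card V * (G.adjMatrix ℝ).charpoly.eval (r - r⁻¹) := by
    rw [SimpleGraph.aeval_charPoly (hairing G), SimpleGraph.eval_charpoly_adjMatrix_hairing G hr,
      Nat.card_eq_fintype_card]
  have hinv : -(1 / lam) - (-(1 / lam))⁻¹ = lam - lam⁻¹ := by
    rw [one_div, inv_neg, inv_inv]
    ring
  have hpow : lam ^ (2 * Nat.card V) * (-1) ^ Nat.card V * (-(1 / lam)) ^ Nat.card V =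
      lam ^ Nat.card V := by
    rw [pow_mul', sq, mul_assoc, mul_assoc, ← mul_pow, ← mul_pow,
      show lam * (-1 * -(1 / lam)) = 1 by field_simp, one_pow, mul_one]
  rw [hchar lam hlam, hchar _ (by simpa using hlam), hinv, ← mul_assoc, hpow]
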